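/- Let r, e, g, d, n, b_0, b_1, b_2 be integers with e ≥ 3, r > (e+1)(e−2), g ≥ 0, b_0 ≥ 0, b_1 ≥ 0, b_2 ≥ 0, and set M = max(2g−1, 0). Suppose the dimension constraint r·n = (r+2−e)·d − r·(g−1) holds, that b_1 ≥ n − b_2 − M, and that d·(r − (e+1)(e−2)) > r·((M + g − 1)·(1+e) + 1 + g·(r+2)). Then (d − n − b_2 + M)·e + 1 + g·(r+2) + (r+1)·b_2 < (2r+5−2e)·b_2 + (r+2−e)·b_0 + b_1. -/
import Mathlib


theorem stmt_4 (r e g d n b0 b1 b2 : ℤ) (he : 3 ≤ e) (hr : (e + 1) * (e - 2) < r)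
    (hg : 0 ≤ g) (hb0 : 0 ≤ b0) (hb1 : 0 ≤ b1) (hb2 : 0 ≤ b2)
    (hdim : r * n = (r + 2 - e) * d - r * (g - 1))
    (hb1n : n - b2 - max (2 * g - 1) 0 ≤ b1)
    (hd : d * (r - (e + 1) * (e - 2)) >
      r * ((max (2 * g - 1) 0 + g - 1) * (1 + e) + 1 + g * (r + 2))) :
    (d - n - b2 + max (2 * g - 1) 0) * e + 1 + g * (r + 2) + (r + 1) * b2 <
      (2 * r + 5 - 2 * e) * b2 + (r + 2 - e) * b0 + b1 := by
  set M := max (2 * g - 1) 0 with hM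
  have hr0 : (0:ℤ) < r := by nlinarith
  have h1 : r * (d - n - b2 + M) = (e - 2) * d + r * (M + g - 1) - r * b2 := by
    linarith
  have h1m : r * ((d - n - b2 + M) * (e + 1)) =
      ((e - 2) * d + r * (M + g - 1) - r * b2) * (e + 1) := by
    linear_combination (e + 1) * h1
  have hb2e : 0 ≤ r * b2 * (e + 1) :=
    mul_nonneg (mul_nonneg hr0.le hb2) (by linarith)
  have key : r * ((d - n - b2 + M) * (e + 1) + 1 + g * (r + 2)) < r * d := by
    nlinarith [hd, h1m, hb2e]
  have key2 : (d - n - b2 + M) * (e + 1) + 1 + g * (r + 2) < d :=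
    lt_of_mul_lt_mul_left key hr0.le
  have h2 : 0 ≤ (r + 2 - 2 * e) * b2 :=
    mul_nonneg (by nlinarith) hb2
  have h3 : 0 ≤ (r + 2 - e) * b0 :=
    mul_nonneg (by nlinarith) hb0
  nlinarith [key2, hb1n, h2, h3]
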